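/- arXiv:2407.03250 — 2 statements merged into one kernel-verified Lean document; each statement's English description precedes it below -/
import Mathlib

section
/- (Compression of Hadamard products.) Assume the random-embedding compression theorem: for every ε ∈ (0,1), n₁, n₂ ∈ ℕ, with r = ⌈9 log(3n₁n₂)/ε²⌉, and for every m ∈ ℕ and matrices A ∈ ℝ^{n₁×m}, B ∈ ℝ^{n₂×m}, there exists G ∈ ℝ^{n₁×n₂} of rank at most r with ‖ABᵀ − G‖_max ≤ ε‖A‖_{2,∞}‖B‖_{2,∞}. Then for every t ∈ ℕ, dimensions m₁,…,m_t ∈ ℕ, and matrices A_s ∈ ℝ^{n₁×m_s}, B_s ∈ ℝ^{n₂×m_s} (s = 1,…,t), there exists G ∈ ℝ^{n₁×n₂} of rank at most r such that ‖(A₁B₁ᵀ) ∗ ⋯ ∗ (A_tB_tᵀ) − G‖_max ≤ ε ∏_{s=1}^{t} ‖A_s‖_{2,∞}‖B_s‖_{2,∞}. -/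
/-!
Write each factor of the Hadamard product as `A s * (B s)ᵀ`. Taking, for every row, the Kronecker
product of the rows of the `A s` (resp. `B s`) gives matrices `A'`, `B'` with `t`-fold product
columns such that `A' * B'ᵀ` is exactly the Hadamard product, and whose row norms are the products
of the row norms of the factors. Applying the compression theorem to `A'` and `B'` (after
enumerating their columns by `Fin (∏ s, m s)`) gives the result.
-/

namespace Matrix

variable {ι σ : Type*} {κ : σ → Type*}

/-- The row-wise Kronecker (face-splitting, transposed Khatri–Rao) product of a family. -/
def rowKron [Fintype σ] {R : Type*} [CommMonoid R] (A : ∀ s, Matrix ι (κ s) R) :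
    Matrix ι (∀ s, κ s) R :=
  of fun i k => ∏ s, A s i (k s)

theorem rowKron_mul_transpose_rowKron_apply {ι' R : Type*} [Fintype σ] [DecidableEq σ]
    [∀ s, Fintype (κ s)] [CommSemiring R] (A : ∀ s, Matrix ι (κ s) R)
    (B : ∀ s, Matrix ι' (κ s) R) (i : ι) (j : ι') :
    (rowKron A * (rowKron B)ᵀ) i j = ∏ s, (A s * (B s)ᵀ) i j := by
  simp only [mul_apply, transpose_apply, rowKron, of_apply, Fintype.prod_sum,
    Finset.prod_mul_distrib]

noncomputable def rowNorm {κ : Type*} [Fintype κ] (A : Matrix ι κ ℝ) (i : ι) : ℝ :=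
  √(∑ k, A i k ^ 2)

noncomputable def twoInftyNorm {κ : Type*} [Fintype κ] (A : Matrix ι κ ℝ) : ℝ :=
  ⨆ i, rowNorm A i

section Norms

variable {κ' κ'' : Type*} [Fintype κ'] [Fintype κ'']

theorem rowNorm_submatrix_equiv (A : Matrix ι κ' ℝ) (e : κ'' ≃ κ') (i : ι) :
    rowNorm (A.submatrix id e) i = rowNorm A i := by
  simp only [rowNorm, submatrix_apply, id, e.sum_comp (fun k => A i k ^ 2)]

theorem twoInftyNorm_submatrix_equiv (A : Matrix ι κ' ℝ) (e : κ'' ≃ κ') :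
    twoInftyNorm (A.submatrix id e) = twoInftyNorm A := by
  simp only [twoInftyNorm, rowNorm_submatrix_equiv]

theorem rowNorm_le_twoInftyNorm [Finite ι] (A : Matrix ι κ' ℝ) (i : ι) :
    rowNorm A i ≤ twoInftyNorm A :=
  le_ciSup (Set.finite_range _).bddAbove i

theorem twoInftyNorm_nonneg (A : Matrix ι κ' ℝ) : 0 ≤ twoInftyNorm A :=
  Real.iSup_nonneg fun _ => Real.sqrt_nonneg _

theorem rowNorm_rowKron [Fintype σ] [DecidableEq σ] [∀ s, Fintype (κ s)]
    (A : ∀ s, Matrix ι (κ s) ℝ) (i : ι) :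
    rowNorm (rowKron A) i = ∏ s, rowNorm (A s) i := by
  have hsq : ∑ k, rowKron A i k ^ 2 = ∏ s, ∑ k, A s i k ^ 2 := by
    simp only [rowKron, of_apply, Fintype.prod_sum, Finset.prod_pow]
  rw [rowNorm, hsq, Real.sqrt_prod _ fun s _ => Finset.sum_nonneg fun k _ => sq_nonneg _]
  rfl

theorem twoInftyNorm_rowKron_le [Finite ι] [Nonempty ι] [Fintype σ] [DecidableEq σ]
    [∀ s, Fintype (κ s)] (A : ∀ s, Matrix ι (κ s) ℝ) :
    twoInftyNorm (rowKron A) ≤ ∏ s, twoInftyNorm (A s) :=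
  ciSup_le fun i => (rowNorm_rowKron A i).trans_le <|
    Finset.prod_le_prod (fun _ _ => Real.sqrt_nonneg _)
      fun s _ => rowNorm_le_twoInftyNorm (A s) i

end Norms

end Matrix

open Matrix

theorem stmt7_general {n₁ n₂ : ℕ} (ε : ℝ) (hε : ε ∈ Set.Ioo (0:ℝ) 1)
    (r : ℕ)
    (compress : ∀ (m : ℕ) (A : Matrix (Fin n₁) (Fin m) ℝ) (B : Matrix (Fin n₂) (Fin m) ℝ),
      ∃ G : Matrix (Fin n₁) (Fin n₂) ℝ, G.rank ≤ r ∧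
        ∀ i j, |(A * Bᵀ) i j - G i j| ≤
          ε * ((⨆ i', Real.sqrt (∑ k, (A i' k) ^ 2)) * (⨆ j', Real.sqrt (∑ k, (B j' k) ^ 2))))
    (t : ℕ) (m : Fin t → ℕ)
    (A : ∀ s, Matrix (Fin n₁) (Fin (m s)) ℝ) (B : ∀ s, Matrix (Fin n₂) (Fin (m s)) ℝ) :
    ∃ G : Matrix (Fin n₁) (Fin n₂) ℝ, G.rank ≤ r ∧
      ∀ i j, |(∏ s, ((A s) * (B s)ᵀ) i j) - G i j| ≤
        ε * ∏ s, (⨆ i', Real.sqrt (∑ k, (A s i' k) ^ 2)) *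
              (⨆ j', Real.sqrt (∑ k, (B s j' k) ^ 2)) := by
  let e := (finPiFinEquiv (n := m)).symm
  obtain ⟨G, hGr, hG⟩ :=
    compress _ ((rowKron A).submatrix id e) ((rowKron B).submatrix id e)
  refine ⟨G, hGr, fun i j => ?_⟩
  have : Nonempty (Fin n₁) := ⟨i⟩
  have : Nonempty (Fin n₂) := ⟨j⟩
  have hprod : ((rowKron A).submatrix id e * ((rowKron B).submatrix id e)ᵀ) i j =
      ∏ s, (A s * (B s)ᵀ) i j := by
    rw [transpose_submatrix, submatrix_mul_equiv, submatrix_id_id,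
      rowKron_mul_transpose_rowKron_apply]
  calc |∏ s, (A s * (B s)ᵀ) i j - G i j|
      ≤ ε * (twoInftyNorm (rowKron A) * twoInftyNorm (rowKron B)) := by
        rw [← hprod, ← twoInftyNorm_submatrix_equiv (rowKron A) e,
          ← twoInftyNorm_submatrix_equiv (rowKron B) e]
        exact hG i j
    _ ≤ ε * ((∏ s, twoInftyNorm (A s)) * ∏ s, twoInftyNorm (B s)) :=
        mul_le_mul_of_nonneg_left
          (mul_le_mul (twoInftyNorm_rowKron_le A) (twoInftyNorm_rowKron_le B)
            (twoInftyNorm_nonneg _) (Finset.prod_nonneg fun s _ => twoInftyNorm_nonneg _))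
          hε.1.le
    _ = _ := by rw [← Finset.prod_mul_distrib]; rfl

/-- Compression of Hadamard products: assuming the random-embedding compression theorem
(with rank `r = ⌈9 log(3 n₁ n₂)/ε²⌉`), a Hadamard product of `t` factorized matrices admits a
rank-`r` entrywise approximation with error `ε` times the product of the `(2,∞)`-norms of all
the factors. -/
theorem stmt7 {n₁ n₂ : ℕ} (ε : ℝ) (hε : ε ∈ Set.Ioo (0:ℝ) 1)
    (r : ℕ) (hr : r = ⌈9 * Real.log (3 * n₁ * n₂) / ε ^ 2⌉₊)
    (compress : ∀ (m : ℕ) (A : Matrix (Fin n₁) (Fin m) ℝ) (B : Matrix (Fin n₂) (Fin m) ℝ),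
      ∃ G : Matrix (Fin n₁) (Fin n₂) ℝ, G.rank ≤ r ∧
        ∀ i j, |(A * Bᵀ) i j - G i j| ≤
          ε * ((⨆ i', Real.sqrt (∑ k, (A i' k) ^ 2)) * (⨆ j', Real.sqrt (∑ k, (B j' k) ^ 2))))
    (t : ℕ) (m : Fin t → ℕ)
    (A : ∀ s, Matrix (Fin n₁) (Fin (m s)) ℝ) (B : ∀ s, Matrix (Fin n₂) (Fin (m s)) ℝ) :
    ∃ G : Matrix (Fin n₁) (Fin n₂) ℝ, G.rank ≤ r ∧
      ∀ i j, |(∏ s, ((A s) * (B s)ᵀ) i j) - G i j| ≤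
        ε * ∏ s, (⨆ i', Real.sqrt (∑ k, (A s i' k) ^ 2)) *
              (⨆ j', Real.sqrt (∑ k, (B s j' k) ^ 2)) :=
  stmt7_general ε hε r compress t m A B
end

section
/- (Factorization absorbing rank-one terms.) For any n₁, n₂, m, p ∈ ℕ, any A ∈ ℝ^{n₁×m} and B ∈ ℝ^{n₂×m}, and any rank-at-most-one matrices Z₁, …, Z_p ∈ ℝ^{n₁×n₂}, there exist C ∈ ℝ^{n₁×(m+p)} and D ∈ ℝ^{n₂×(m+p)} such that A Bᵀ + Σ_{i=1}^{p} Z_i = C Dᵀ, ‖C‖_{2,∞}² ≤ ‖A‖_{2,∞}² + Σ_{i=1}^{p} ‖Z_i‖_max, and ‖D‖_{2,∞}² ≤ ‖B‖_{2,∞}² + Σ_{i=1}^{p} ‖Z_i‖_max. -/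
open Matrix

/-!
Each `Zᵢ` of rank at most one is an outer product `uᵢ vᵢᵀ`. Scaling `uᵢ` by `√(‖vᵢ‖_∞ / ‖uᵢ‖_∞)`
and `vᵢ` by its inverse leaves `uᵢ vᵢᵀ` unchanged and bounds every squared entry of both factors
by `‖uᵢ‖_∞ ‖vᵢ‖_∞ = ‖Zᵢ‖_max`. Appending the `uᵢ` as columns to `A` and the `vᵢ` to `B` gives
`C Dᵀ = A Bᵀ + Σᵢ uᵢ vᵢᵀ`, and each row of `C` (resp. `D`) gains squared norm at most `Σᵢ ‖Zᵢ‖_max`.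
-/

namespace Matrix

variable {m n : Type*}

theorem exists_eq_vecMulVec_of_rank_le_one {K : Type*} [Field K] [Fintype m] [Fintype n]
    (Z : Matrix m n K) (h : Z.rank ≤ 1) : ∃ (u : m → K) (v : n → K), Z = vecMulVec u v := by
  rw [rank_eq_finrank_span_cols, Submodule.finrank_le_one_iff_isPrincipal] at h
  obtain ⟨u, hu⟩ := h
  have hcol : ∀ j, ∃ c : K, c • u = Z.col j := fun j =>
    Submodule.mem_span_singleton.mp (hu ▸ Submodule.subset_span (Set.mem_range_self j))
  choose v hv using hcol
  refine ⟨u, v, ext fun a j => ?_⟩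
  rw [vecMulVec_apply, mul_comm, ← col_apply Z j a, ← hv j, Pi.smul_apply, smul_eq_mul]

theorem fromCols_mul_transpose_fromCols {R : Type*} [CommSemiring R] {k₁ k₂ : Type*}
    [Fintype k₁] [Fintype k₂] (A : Matrix m k₁ R) (U : Matrix m k₂ R) (B : Matrix n k₁ R)
    (V : Matrix n k₂ R) : fromCols A U * (fromCols B V)ᵀ = A * Bᵀ + U * Vᵀ := by
  rw [transpose_fromCols, fromCols_mul_fromRows]

theorem of_mul_transpose_of_eq_sum_vecMulVec {R : Type*} {ι : Type*} [CommSemiring R] [Fintype ι]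
    (u : ι → m → R) (v : ι → n → R) :
    of (fun a i => u i a) * (of fun b i => v i b)ᵀ = ∑ i, vecMulVec (u i) (v i) := by
  ext a b
  simp [mul_apply, sum_apply, vecMulVec_apply]

end Matrix

lemma sq_sqrt_div_mul_le {x α β : ℝ} (hα : 0 < α) (hβ : 0 ≤ β) (hx : |x| ≤ α) :
    (√(β / α) * x) ^ 2 ≤ α * β := by
  rw [mul_pow, Real.sq_sqrt (by positivity)]
  calc β / α * x ^ 2 ≤ β / α * α ^ 2 :=
        mul_le_mul_of_nonneg_left (sq_le_sq' (abs_le.mp hx).1 (abs_le.mp hx).2) (by positivity)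
    _ = α * β := by field_simp

lemma iSup_abs_nonneg {m n : Type*} (Z : Matrix m n ℝ) : 0 ≤ ⨆ q : m × n, |Z q.1 q.2| :=
  Real.iSup_nonneg fun _ => abs_nonneg _

section MaxNorm

variable {m n : Type*} [Fintype m] [Fintype n]

lemma abs_apply_le_iSup_abs (Z : Matrix m n ℝ) (a : m) (b : n) :
    |Z a b| ≤ ⨆ q : m × n, |Z q.1 q.2| :=
  le_ciSup (f := fun q : m × n => |Z q.1 q.2|) (Finite.bddAbove_range _) (a, b)

theorem exists_balanced_vecMulVec_eq (u : m → ℝ) (v : n → ℝ) :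
    ∃ (u' : m → ℝ) (v' : n → ℝ), vecMulVec u' v' = vecMulVec u v ∧
      (∀ a, u' a ^ 2 ≤ ⨆ q : m × n, |vecMulVec u v q.1 q.2|) ∧
      (∀ b, v' b ^ 2 ≤ ⨆ q : m × n, |vecMulVec u v q.1 q.2|) := by
  set Z := vecMulVec u v
  by_cases hZ : Z = 0
  · exact ⟨0, 0, by simp [Z, hZ], fun _ => by simpa using iSup_abs_nonneg Z,
      fun _ => by simpa using iSup_abs_nonneg Z⟩
  obtain ⟨a₁, b₁, hab₁⟩ : ∃ a b, u a * v b ≠ 0 := by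
    by_contra! h
    exact hZ (ext fun a b => h a b)
  have : Nonempty m := ⟨a₁⟩
  have : Nonempty n := ⟨b₁⟩
  obtain ⟨a₀, ha₀⟩ := Finite.exists_max fun a => |u a|
  obtain ⟨b₀, hb₀⟩ := Finite.exists_max fun b => |v b|
  have hα : 0 < |u a₀| := (abs_pos.mpr (left_ne_zero_of_mul hab₁)).trans_le (ha₀ a₁)
  have hβ : 0 < |v b₀| := (abs_pos.mpr (right_ne_zero_of_mul hab₁)).trans_le (hb₀ b₁)
  have hαβ : |u a₀| * |v b₀| ≤ ⨆ q : m × n, |Z q.1 q.2| := by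
    simpa [Z, vecMulVec_apply, abs_mul] using abs_apply_le_iSup_abs Z a₀ b₀
  refine ⟨√(|v b₀| / |u a₀|) • u, √(|u a₀| / |v b₀|) • v, ?_, fun a => ?_, fun b => ?_⟩
  · rw [smul_vecMulVec, vecMulVec_smul, smul_smul, ← Real.sqrt_mul (by positivity),
      div_mul_div_cancel₀' hβ.ne', div_self hα.ne', Real.sqrt_one, one_smul]
  · exact (sq_sqrt_div_mul_le hα hβ.le (ha₀ a)).trans hαβ
  · exact (sq_sqrt_div_mul_le hβ hα.le (hb₀ b)).trans (mul_comm (|u a₀|) _ ▸ hαβ)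

theorem exists_eq_vecMulVec_sq_le_iSup_abs (Z : Matrix m n ℝ) (h : Z.rank ≤ 1) :
    ∃ (u : m → ℝ) (v : n → ℝ), Z = vecMulVec u v ∧
      (∀ a, u a ^ 2 ≤ ⨆ q : m × n, |Z q.1 q.2|) ∧ (∀ b, v b ^ 2 ≤ ⨆ q : m × n, |Z q.1 q.2|) := by
  obtain ⟨u, v, rfl⟩ := exists_eq_vecMulVec_of_rank_le_one Z h
  obtain ⟨u', v', huv, hu, hv⟩ := exists_balanced_vecMulVec_eq u v
  exact ⟨u', v', huv.symm, hu, hv⟩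

end MaxNorm

theorem iSup_sum_sq_fromCols_le {m k₁ k₂ : Type*} [Fintype m] [Fintype k₁] [Fintype k₂]
    (A : Matrix m k₁ ℝ) (U : Matrix m k₂ ℝ) {c : ℝ} (hc : 0 ≤ c) (hU : ∀ a, ∑ j, U a j ^ 2 ≤ c) :
    (⨆ a, ∑ k, fromCols A U a k ^ 2) ≤ (⨆ a, ∑ k, A a k ^ 2) + c := by
  refine Real.iSup_le (fun a => ?_) (add_nonneg (Real.iSup_nonneg fun _ => by positivity) hc)
  rw [Fintype.sum_sum_type]
  simp only [fromCols_apply_inl, fromCols_apply_inr]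
  exact add_le_add (le_ciSup (f := fun a => ∑ k, A a k ^ 2) (Finite.bddAbove_range _) a) (hU a)

/-- Factorization absorbing rank-one terms: `A Bᵀ + Σᵢ Zᵢ = C Dᵀ` with
`‖C‖_{2,∞}² ≤ ‖A‖_{2,∞}² + Σᵢ ‖Zᵢ‖_max` and `‖D‖_{2,∞}² ≤ ‖B‖_{2,∞}² + Σᵢ ‖Zᵢ‖_max`. -/
theorem stmt11 {n₁ n₂ m p : ℕ}
    (A : Matrix (Fin n₁) (Fin m) ℝ) (B : Matrix (Fin n₂) (Fin m) ℝ)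
    (Z : Fin p → Matrix (Fin n₁) (Fin n₂) ℝ) (hZ : ∀ i, (Z i).rank ≤ 1) :
    ∃ (C : Matrix (Fin n₁) (Fin m ⊕ Fin p) ℝ) (D : Matrix (Fin n₂) (Fin m ⊕ Fin p) ℝ),
      A * Bᵀ + ∑ i, Z i = C * Dᵀ ∧
      (⨆ i, ∑ k, (C i k) ^ 2) ≤
        (⨆ i, ∑ k, (A i k) ^ 2) + ∑ i, ⨆ q : Fin n₁ × Fin n₂, |Z i q.1 q.2| ∧
      (⨆ j, ∑ k, (D j k) ^ 2) ≤
        (⨆ j, ∑ k, (B j k) ^ 2) + ∑ i, ⨆ q : Fin n₁ × Fin n₂, |Z i q.1 q.2| := by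
  choose u v hZuv hu hv using fun i => exists_eq_vecMulVec_sq_le_iSup_abs (Z i) (hZ i)
  have hS : 0 ≤ ∑ i, ⨆ q : Fin n₁ × Fin n₂, |Z i q.1 q.2| :=
    Finset.sum_nonneg fun i _ => iSup_abs_nonneg (Z i)
  refine ⟨fromCols A (of fun a i => u i a), fromCols B (of fun b i => v i b), ?_,
    iSup_sum_sq_fromCols_le A _ hS fun a => Finset.sum_le_sum fun i _ => hu i a,
    iSup_sum_sq_fromCols_le B _ hS fun b => Finset.sum_le_sum fun i _ => hv i b⟩
  rw [fromCols_mul_transpose_fromCols, of_mul_transpose_of_eq_sum_vecMulVec]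
  simp only [hZuv]
end
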